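/- arXiv:1509.06619 — 6 statements merged into one kernel-verified Lean document; each statement's English description precedes it below -/
import Mathlib

section
/- The only integers x, z satisfying x(3x^4 + 20x^2 + 10) = z^2 are x = 0 and z = 0. -/
/-!
Since `gcd(x, 3x⁴ + 20x² + 10)` divides `10`, after splitting off `gcd(x, 10)` the cofactor must be
a square; this is impossible modulo `5` or `8` unless `10 ∣ x`, and `x = 10e` leads to
`s² = 3000e⁴ + 200e² + 1`. With `q = 30e² + 1` this reads `3s² = 10q² - 7`, whose solutions have
`q = A + 3B` with `A + |B|√30 = (11 + 2√30)ⁿ`. Odd `n` are excluded modulo `3`; for `n = 2m`,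
writing `(11 + 2√30)ᵐ = a + c√30` gives `c(10c ± a) = 5e²` with coprime factors, so either
`c = r²` and `10c ± a = 5t²`, which fails modulo `16`, or `c = 5r²`. In the latter case a descent
applies: a power with `y = 5r²` is the square of a smaller one with `x = s²`, `y = 10w²`, which in
turn is the square of a smaller one with `y = 5r²`, odd powers being excluded modulo `4` and `3`.
-/

open Pell

theorem Int.sq_and_eq_mul_sq_of_isCoprime {a c k m : ℤ} (hcop : IsCoprime a (k * c)) (ha : 0 < a)
    (h : a * c = k * m ^ 2) : (∃ s, a = s ^ 2) ∧ ∃ w, c = k * w ^ 2 := by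
  obtain ⟨s, rfl⟩ : ∃ s, a = s ^ 2 := by
    obtain ⟨s, hs | hs⟩ := Int.sq_of_isCoprime hcop (c := k * m) (by linear_combination k * h)
    · exact ⟨s, hs⟩
    · nlinarith [sq_nonneg s]
  have hs0 : s ^ 2 ≠ 0 := ha.ne'
  have hdvd : s ^ 2 ∣ m ^ 2 :=
    hcop.of_mul_right_left.dvd_of_dvd_mul_left ⟨c, by linear_combination -h⟩
  obtain ⟨w, rfl⟩ := (Int.pow_dvd_pow_iff two_ne_zero).mp hdvd
  exact ⟨⟨s, rfl⟩, w, mul_left_cancel₀ hs0 (by linear_combination h)⟩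

theorem exists_eq_sq_of_sq_mul_mul_eq_sq {d y c w z : ℤ} (hd : d ≠ 0) (hcop : IsCoprime y c)
    (hg : 0 < c + y * w) (h : d ^ 2 * (y * (c + y * w)) = z ^ 2) : ∃ v, c + y * w = v ^ 2 := by
  obtain ⟨z, rfl⟩ := (Int.pow_dvd_pow_iff two_ne_zero).mp ⟨_, h.symm⟩
  have h' : (c + y * w) * y = 1 * z ^ 2 := by
    linear_combination mul_left_cancel₀ (pow_ne_zero 2 hd) (h.trans (mul_pow d z 2))
  have hcop' : IsCoprime (c + y * w) (1 * y) := by simpa using (hcop.add_mul_left_right w).symm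
  exact (Int.sq_and_eq_mul_sq_of_isCoprime hcop' hg h').1

namespace Pell.Solution₁

variable {d : ℤ}

theorem x_sq (b : Solution₁ d) : (b ^ 2).x = b.x ^ 2 + d * b.y ^ 2 := by
  rw [sq, x_mul]; ring

theorem y_sq (b : Solution₁ d) : (b ^ 2).y = 2 * b.x * b.y := by
  rw [sq, y_mul]; ring

theorem isCoprime_x_mul_y (b : Solution₁ d) : IsCoprime b.x (d * b.y) :=
  ⟨b.x, -b.y, by linear_combination b.prop⟩

end Pell.Solution₁

def fundSol30 : Solution₁ 30 := .mk 11 2 (by norm_num)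

theorem isFundamental_fundSol30 : IsFundamental fundSol30 := by
  refine ⟨by simp [fundSol30], by simp [fundSol30], fun {b} hb => ?_⟩
  simp only [fundSol30, Solution₁.x_mk]
  by_contra! hlt
  have hy := b.prop_y
  generalize b.y ^ 2 = t at hy
  generalize b.x = x at hb hlt hy
  interval_cases x <;> omega

theorem fundSol30_pow_y_nonneg (n : ℕ) : 0 ≤ (fundSol30 ^ n).y := by
  cases n with
  | zero => simp
  | succ n => exact (Solution₁.y_pow_succ_pos (by simp [fundSol30]) (by simp [fundSol30]) n).le

theorem fundSol30_pow_odd_modEq (m : ℕ) :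
    (fundSol30 ^ (2 * m + 1)).x ≡ 2 [ZMOD 3] ∧ (fundSol30 ^ (2 * m + 1)).y ≡ 2 [ZMOD 4] := by
  induction m with
  | zero => simp [fundSol30]; decide
  | succ m ih =>
    have hx : (fundSol30 ^ 2).x = 241 := by simp [Solution₁.x_sq, fundSol30]
    have hy : (fundSol30 ^ 2).y = 44 := by simp [Solution₁.y_sq, fundSol30]
    rw [show 2 * (m + 1) + 1 = (2 * m + 1) + 2 by ring, pow_add, Solution₁.x_mul, Solution₁.y_mul,
      hx, hy]
    unfold Int.ModEq at *
    omega

theorem fundSol30_pow_descent (n : ℕ) :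
    (∀ r, r ≠ 0 → (fundSol30 ^ n).y ≠ 5 * r ^ 2) ∧
      ∀ s w, w ≠ 0 → (fundSol30 ^ n).x = s ^ 2 → (fundSol30 ^ n).y ≠ 10 * w ^ 2 := by
  induction n using Nat.strong_induction_on with
  | _ n ih =>
  obtain ⟨m, rfl | rfl⟩ := Nat.even_or_odd' n
  · rcases Nat.eq_zero_or_pos m with rfl | hm
    · constructor <;> intros <;> simp_all
    obtain ⟨hV₁, hV₂⟩ := ih m (by omega)
    rw [pow_mul', Solution₁.x_sq, Solution₁.y_sq]
    have ha : 0 < (fundSol30 ^ m).x := Solution₁.x_pow_pos (by simp [fundSol30]) m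
    have hcop := (fundSol30 ^ m).isCoprime_x_mul_y
    set a := (fundSol30 ^ m).x
    set c := (fundSol30 ^ m).y
    constructor
    · intro r hr h
      obtain ⟨r, rfl⟩ : 2 ∣ r := by
        have h2 : (2 : ℤ) ∣ 5 * r ^ 2 := ⟨a * c, by rw [← h]; ring⟩
        exact Int.prime_two.dvd_of_dvd_pow ((Int.prime_two.dvd_mul.1 h2).resolve_left (by norm_num))
      obtain ⟨⟨s, hs⟩, w, hw⟩ := Int.sq_and_eq_mul_sq_of_isCoprime (k := 10)
        (IsCoprime.of_mul_right_right (y := 3) (by rwa [← mul_assoc])) ha (m := r) (by linarith)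
      exact hV₂ s w (by rintro rfl; simp_all) hs hw
    · intro s w hw _ h
      obtain ⟨-, q, hq⟩ := Int.sq_and_eq_mul_sq_of_isCoprime (k := 5)
        (IsCoprime.of_mul_right_right (y := 6) (by rwa [← mul_assoc])) ha (m := w) (by linarith)
      exact hV₁ q (by rintro rfl; simp_all) hq
  · obtain ⟨hx, hy⟩ := fundSol30_pow_odd_modEq m
    refine ⟨fun r _ h => ?_, fun s w _ hs _ => ?_⟩
    · have key : ∀ R : ZMod 4, 5 * R ^ 2 ≠ 2 := by decide
      rw [h] at hy
      exact key r (by simpa using (ZMod.intCast_eq_intCast_iff _ _ 4).2 hy)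
    · have key : ∀ S : ZMod 3, S ^ 2 ≠ 2 := by decide
      rw [hs] at hx
      exact key s (by simpa using (ZMod.intCast_eq_intCast_iff _ _ 3).2 hx)

theorem eq_zero_of_sq_eq_750_mul_pow_four_add_one {a r : ℤ} (h : a ^ 2 = 30 * (5 * r ^ 2) ^ 2 + 1) :
    r = 0 := by
  by_contra hr
  have ha : 0 < |a| := abs_pos.2 (by rintro rfl; nlinarith [sq_nonneg r])
  obtain ⟨n, hn⟩ := isFundamental_fundSol30.eq_pow_of_nonneg
    (a := .mk |a| (5 * r ^ 2) (by rw [sq_abs]; linarith)) ha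
    (by simp only [Solution₁.y_mk]; positivity)
  exact (fundSol30_pow_descent n).1 r hr (by rw [← hn]; rfl)

theorem ten_mul_sq_add_ne_five_mul_sq {a r t : ℤ} (h : a ^ 2 = 30 * (r ^ 2) ^ 2 + 1) :
    10 * r ^ 2 + a ≠ 5 * t ^ 2 := by
  have key : ∀ A R T : ZMod 16, A ^ 2 = 30 * (R ^ 2) ^ 2 + 1 → 10 * R ^ 2 + A ≠ 5 * T ^ 2 := by
    decide
  exact fun h' => key a r t (by exact_mod_cast congrArg (Int.cast : ℤ → ZMod 16) h)
    (by exact_mod_cast congrArg (Int.cast : ℤ → ZMod 16) h')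

theorem mul_ten_mul_add_ne_five_mul_sq {a c e : ℤ} (hpell : a ^ 2 = 30 * c ^ 2 + 1)
    (hc : 0 < c) : c * (10 * c + a) ≠ 5 * e ^ 2 := by
  intro h
  have hpos : 0 < 10 * c + a := by nlinarith
  have hcop : IsCoprime c (10 * c + a) := ⟨-10 * a - 30 * c, a, by linear_combination hpell⟩
  rcases (show Prime (5 : ℤ) by norm_num).dvd_mul.1 ⟨e ^ 2, h⟩ with ⟨c', rfl⟩ | ⟨t, ht⟩
  · obtain ⟨⟨r, rfl⟩, -⟩ := Int.sq_and_eq_mul_sq_of_isCoprime (k := 1) (m := e)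
      (by simpa using hcop.of_mul_left_right) (by linarith) (by linarith)
    have := eq_zero_of_sq_eq_750_mul_pow_four_add_one hpell
    simp_all
  · rw [ht] at h hcop
    obtain ⟨⟨r, rfl⟩, t, rfl⟩ := Int.sq_and_eq_mul_sq_of_isCoprime (k := 1) (m := e)
      (by simpa using hcop.of_mul_right_right) hc (by linarith)
    exact ten_mul_sq_add_ne_five_mul_sq hpell (t := t) (by linarith)

theorem exists_pell_of_three_mul_sq_eq {q s : ℤ} (h : 3 * s ^ 2 = 10 * q ^ 2 - 7) :
    ∃ A B : ℤ, A ^ 2 = 30 * B ^ 2 + 1 ∧ q = A + 3 * B := by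
  -- `A + B√30 = (q√10 + s√3) / (√10 + √3)` is integral as soon as `q ≡ s [ZMOD 7]`.
  have h7 : (7 : ℤ) ∣ (q - s) * (q + s) := by
    have : (7 : ℤ) ∣ 3 * ((q - s) * (q + s)) := ⟨1 - q ^ 2, by linear_combination -h⟩
    exact ((show Prime (7 : ℤ) by norm_num).dvd_mul.1 this).resolve_left (by norm_num)
  obtain ⟨k, hk⟩ : ∃ k, 3 * (q - 7 * k) ^ 2 = 10 * q ^ 2 - 7 := by
    rcases (show Prime (7 : ℤ) by norm_num).dvd_mul.1 h7 with ⟨k, hk⟩ | ⟨k, hk⟩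
    · exact ⟨k, by rw [← hk]; linear_combination h⟩
    · exact ⟨k, by rw [← hk]; linear_combination h⟩
  refine ⟨q + 3 * k, -k, ?_, by ring⟩
  have : 7 * ((q + 3 * k) ^ 2 - (30 * (-k) ^ 2 + 1)) = 0 := by linear_combination -hk
  linarith [(mul_eq_zero.1 this).resolve_left (by norm_num)]

theorem eq_zero_of_sq_eq_3000_mul_pow_four_add {e s : ℤ}
    (h : s ^ 2 = 3000 * e ^ 4 + 200 * e ^ 2 + 1) : e = 0 := by
  by_contra he
  obtain ⟨A, B, hpell, hq⟩ := exists_pell_of_three_mul_sq_eq (q := 30 * e ^ 2 + 1) (s := s)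
    (by linear_combination 3 * h)
  have hA : 0 < A := by nlinarith [sq_nonneg (A - 3 * B), sq_nonneg e]
  obtain ⟨n, hn⟩ := isFundamental_fundSol30.eq_pow_of_nonneg
    (a := .mk A |B| (by rw [sq_abs]; linarith)) hA (abs_nonneg B)
  have hAx : A = (fundSol30 ^ n).x := by rw [← hn]; rfl
  have hBy : |B| = (fundSol30 ^ n).y := by rw [← hn]; rfl
  obtain ⟨m, rfl | rfl⟩ := Nat.even_or_odd' n
  · rw [pow_mul', Solution₁.x_sq] at hAx
    rw [pow_mul', Solution₁.y_sq] at hBy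
    have hpell' := (fundSol30 ^ m).prop_x
    set a := (fundSol30 ^ m).x
    set c := (fundSol30 ^ m).y
    obtain ⟨a', ha', hB⟩ : ∃ a', a' ^ 2 = a ^ 2 ∧ B = 2 * a' * c := by
      rcases abs_choice B with hB | hB
      · exact ⟨a, rfl, by linarith⟩
      · exact ⟨-a, by ring, by linarith⟩
    have hc : 0 < c := by
      refine (fundSol30_pow_y_nonneg m).lt_of_ne fun hc => he ?_
      have hB0 : B = 0 := by rw [hB, show c = 0 from hc.symm, mul_zero]
      have hA1 : A = 1 := by nlinarith
      exact pow_eq_zero_iff two_ne_zero |>.1 (by linarith)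
    refine mul_ten_mul_add_ne_five_mul_sq (by linarith) hc (e := e) ?_
    linarith
  · have := (fundSol30_pow_odd_modEq m).1
    rw [← hAx] at this
    unfold Int.ModEq at this
    omega

theorem three_mul_pow_four_add_ne_sq {x v : ℤ} (hx : ¬5 ∣ x) :
    3 * x ^ 4 + 20 * x ^ 2 + 10 ≠ v ^ 2 := by
  have key : ∀ X V : ZMod 5, X ≠ 0 → 3 * X ^ 4 + 20 * X ^ 2 + 10 ≠ V ^ 2 := by decide
  exact fun h => key x v (by rwa [Ne, ZMod.intCast_zmod_eq_zero_iff_dvd])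
    (by exact_mod_cast congrArg (Int.cast : ℤ → ZMod 5) h)

theorem twenty_four_mul_pow_four_add_ne_sq (t v : ℤ) : 24 * t ^ 4 + 40 * t ^ 2 + 5 ≠ v ^ 2 := by
  have key : ∀ T V : ZMod 8, 24 * T ^ 4 + 40 * T ^ 2 + 5 ≠ V ^ 2 := by decide
  exact fun h => key t v (by exact_mod_cast congrArg (Int.cast : ℤ → ZMod 8) h)

theorem three_hundred_seventy_five_mul_pow_four_add_ne_sq (g v : ℤ) :
    375 * g ^ 4 + 100 * g ^ 2 + 2 ≠ v ^ 2 := by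
  have key : ∀ G V : ZMod 5, 375 * G ^ 4 + 100 * G ^ 2 + 2 ≠ V ^ 2 := by decide
  exact fun h => key g v (by exact_mod_cast congrArg (Int.cast : ℤ → ZMod 5) h)

theorem case_n_two (x z : ℤ) (h : x * (3*x^4 + 20*x^2 + 10) = z^2) :
    x = 0 ∧ z = 0 := by
  suffices hx : x = 0 by
    subst hx
    exact ⟨rfl, pow_eq_zero_iff two_ne_zero |>.1 (by linarith)⟩
  have h2p : Prime (2 : ℤ) := Int.prime_two
  have h5p : Prime (5 : ℤ) := by norm_num
  by_cases h2 : 2 ∣ x <;> by_cases h5 : 5 ∣ x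
  · obtain ⟨e, rfl⟩ : 10 ∣ x := by omega
    obtain ⟨v, hv⟩ := exists_eq_sq_of_sq_mul_mul_eq_sq (d := 10) (y := e) (z := z) (c := 1)
      (w := 3000 * e ^ 3 + 200 * e) (by norm_num) isCoprime_one_right (by ring_nf; positivity)
      (by linear_combination h)
    rw [eq_zero_of_sq_eq_3000_mul_pow_four_add (e := e) (s := v) (by linear_combination -hv),
      mul_zero]
  · obtain ⟨t, rfl⟩ := h2
    have hcop : IsCoprime t 5 := (h5p.coprime_iff_not_dvd.2 fun h => h5 (h.mul_left 2)).symm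
    obtain ⟨v, hv⟩ := exists_eq_sq_of_sq_mul_mul_eq_sq (d := 2) (y := t) (z := z)
      (w := 24 * t ^ 3 + 40 * t) two_ne_zero hcop (by ring_nf; positivity) (by linear_combination h)
    exact (twenty_four_mul_pow_four_add_ne_sq t v (by linear_combination hv)).elim
  · obtain ⟨g, rfl⟩ := h5
    have hcop : IsCoprime g 2 := (h2p.coprime_iff_not_dvd.2 fun h => h2 (h.mul_left 5)).symm
    obtain ⟨v, hv⟩ := exists_eq_sq_of_sq_mul_mul_eq_sq (d := 5) (y := g) (z := z)
      (w := 375 * g ^ 3 + 100 * g) (by norm_num) hcop (by ring_nf; positivity)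
      (by linear_combination h)
    exact (three_hundred_seventy_five_mul_pow_four_add_ne_sq g v (by linear_combination hv)).elim
  · have hcop : IsCoprime x (2 * 5) :=
      (h2p.coprime_iff_not_dvd.2 h2).symm.mul_right (h5p.coprime_iff_not_dvd.2 h5).symm
    obtain ⟨v, hv⟩ := exists_eq_sq_of_sq_mul_mul_eq_sq (d := 1) (y := x) (z := z)
      (w := 3 * x ^ 3 + 20 * x) one_ne_zero hcop (by ring_nf; positivity) (by linear_combination h)
    exact (three_mul_pow_four_add_ne_sq h5 (v := v) (by linear_combination hv)).elim
end

section
/- Let p be a prime and let x, z be integers with x(3x^4 + 20x^2 + 10) = z^p. Set α = gcd(x, 10). Then there exist integers z₁ and z₂ such that x = α^(p-1)·z₁^p and 3x^4 + 20x^2 + 10 = α·z₂^p. -/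
/-!
Write `d = gcd(x, 10)` and `3x⁴ + 20x² + 10 = d·v`. Then `x` and `v` are coprime: a common prime `q`
divides `10`, hence `d`, so `q²` divides both `d·v` and `3x⁴ + 20x²`, hence the squarefree `10`.
So `x·d` and `v` are coprime with product `z^p`; as `v > 0` it is a `p`-th power, and then so is
`x·d = t^p`. Since `d` is squarefree, `d ∣ t`, which gives `x = d^(p-1)·s^p`.
-/

theorem Int.eq_pow_of_mul_eq_pow_of_nonneg_right {a b c : ℤ} (hab : IsCoprime a b) (hb : 0 ≤ b)
    {k : ℕ} (h : a * b = c ^ k) : ∃ e, b = e ^ k := by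
  obtain ⟨e, he⟩ := exists_associated_pow_of_mul_eq_pow' hab.symm (by rwa [mul_comm] at h)
  refine ⟨e.natAbs, ?_⟩
  rw [← Int.natAbs_of_nonneg hb, Int.associated_iff_natAbs.mp he.symm, Int.natAbs_pow]
  push_cast
  rfl

theorem eq_pow_of_mul_pow_eq_pow {R : Type*} [CommRing R] [IsDomain R] [IsIntegrallyClosed R]
    {a b c : R} {k : ℕ} (hk : k ≠ 0) (hb : b ≠ 0) (h : a * b ^ k = c ^ k) : ∃ t, a = t ^ k := by
  obtain ⟨t, rfl⟩ :=
    (IsIntegrallyClosed.pow_dvd_pow_iff hk (a := b) (b := c)).mp ⟨a, by rw [← h, mul_comm]⟩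
  refine ⟨t, mul_right_cancel₀ (pow_ne_zero k hb) ?_⟩
  rw [h, mul_pow, mul_comm]

theorem Squarefree.exists_eq_pow_pred_mul_pow {R : Type*} [CommMonoidWithZero R]
    [IsCancelMulZero R] [DecompositionMonoid R] [Nontrivial R] {d a t : R} (hd : Squarefree d)
    {k : ℕ} (hk : k ≠ 0) (h : a * d = t ^ k) : ∃ s, a = d ^ (k - 1) * s ^ k := by
  obtain ⟨s, rfl⟩ := hd.isRadical k t (h ▸ dvd_mul_left d a)
  refine ⟨s, mul_right_cancel₀ hd.ne_zero ?_⟩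
  rw [h, mul_pow, mul_right_comm, ← pow_succ, Nat.sub_add_cancel (Nat.one_le_iff_ne_zero.mpr hk)]

theorem Int.isCoprime_of_sq_dvd_sub_of_eq_gcd_mul {n x b v : ℤ} (hn : Squarefree n)
    (hb : x ^ 2 ∣ b - n) (hv : b = Int.gcd x n * v) : IsCoprime x v := by
  refine isCoprime_of_prime_dvd ?_ fun q hq hqx hqv ↦ hq.not_isUnit (hn q ?_)
  · rintro ⟨rfl, rfl⟩
    exact hn.ne_zero (by simpa [hv] using hb)
  have hqb : q ∣ b := hv ▸ hqv.mul_left _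
  have hqn : q ∣ n := (dvd_sub_right hqb).mp ((dvd_pow hqx two_ne_zero).trans hb)
  have hqqb : q * q ∣ b := hv ▸ mul_dvd_mul (Int.dvd_coe_gcd hqx hqn) hqv
  exact (dvd_sub_right hqqb).mp ((sq q ▸ pow_dvd_pow_of_dvd hqx 2).trans hb)

theorem Int.exists_eq_pow_of_mul_mul_eq_pow {d x v z : ℤ} {k : ℕ} (hk : k ≠ 0) (hd : Squarefree d)
    (hxv : IsCoprime x v) (hdx : d ∣ x) (hv : 0 < v) (h : x * (d * v) = z ^ k) :
    ∃ z₁ z₂ : ℤ, x = d ^ (k - 1) * z₁ ^ k ∧ v = z₂ ^ k := by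
  have hxdv : (x * d) * v = z ^ k := by rw [← h]; ring
  have hcop : IsCoprime (x * d) v := hxv.mul_left (hxv.of_isCoprime_of_dvd_left hdx)
  obtain ⟨z₂, rfl⟩ := Int.eq_pow_of_mul_eq_pow_of_nonneg_right hcop hv.le hxdv
  obtain ⟨t, ht⟩ := eq_pow_of_mul_pow_eq_pow hk (by rintro rfl; simp [hk] at hv) hxdv
  obtain ⟨z₁, rfl⟩ := hd.exists_eq_pow_pred_mul_pow hk ht
  exact ⟨z₁, z₂, rfl, rfl⟩

theorem factorization_lemma (p : ℕ) (hp : p.Prime) (x z : ℤ)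
    (h : x * (3*x^4 + 20*x^2 + 10) = z^p) :
    ∃ z₁ z₂ : ℤ, x = (Int.gcd x 10 : ℤ)^(p-1) * z₁^p ∧
      3*x^4 + 20*x^2 + 10 = (Int.gcd x 10 : ℤ) * z₂^p := by
  have h10 : Squarefree (10 : ℤ) := Int.squarefree_natCast.mpr <|
    Nat.squarefree_mul_iff.mpr ⟨by norm_num, Nat.prime_two.squarefree, Nat.prime_five.squarefree⟩
  have hb : x ^ 2 ∣ (3*x^4 + 20*x^2 + 10) - 10 := ⟨3*x^2 + 20, by ring⟩
  have hdx : (Int.gcd x 10 : ℤ) ∣ x := Int.gcd_dvd_left x 10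
  have hd10 : (Int.gcd x 10 : ℤ) ∣ 10 := Int.gcd_dvd_right x 10
  obtain ⟨v, hv⟩ : (Int.gcd x 10 : ℤ) ∣ 3*x^4 + 20*x^2 + 10 :=
    (dvd_sub_left hd10).mp ((hdx.trans (dvd_pow_self x two_ne_zero)).trans hb)
  have hv0 : 0 < v := pos_of_mul_pos_right (by rw [← hv]; positivity) (Int.natCast_nonneg _)
  rw [hv] at h ⊢
  obtain ⟨z₁, z₂, hz₁, rfl⟩ := Int.exists_eq_pow_of_mul_mul_eq_pow hp.ne_zero
    (h10.squarefree_of_dvd hd10) (Int.isCoprime_of_sq_dvd_sub_of_eq_gcd_mul h10 hb hv) hdx hv0 h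
  exact ⟨z₁, z₂, hz₁, rfl⟩
end

section
/- The integral points (X, Y) ∈ ℤ × ℤ on the elliptic curve Y^2 = X(X^2 + 100X + 750) are exactly (-54, 306), (-54, -306) and (0, 0). -/
/-!
For `X < 0` the right-hand side is negative outside the window `-91 ≤ X ≤ -9`, which is checked
directly. For `X > 0`, coprimality after dividing out `d = gcd(X, X² + 100X + 750)`, a divisor of
`750`, gives `X = d r²` and `X² + 100X + 750 = d t²`, i.e. `t² = d r⁴ + 100 r² + 750 / d`.
Congruences exclude every divisor except `d = 30`, which reduces to `d = 750` after extracting a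
factor `5`, and `d = 750` itself. There `g = r²` satisfies `(150 g + 10)² - 30 t² = 70`, so
`150 g + 10 + t√30 = (10 ± √30) εⁿ` with `ε = 11 + 2√30` and `εⁿ = uₙ + vₙ√30`. Reducing modulo
`3` and `5` forces `n = 2m` and `g = 2w (50w ± u_m)` with `v_m = 5w`, a product of coprime
squares. Congruences modulo `8` and `23` rule out every case except the sign `+` with `m` even.
That case is excluded by descent: "`u_k` is a square and `v_k` or `2 v_k` is five times a square"
passes from `k = 2j` to `j` (as `v_{2j} = 2 u_j v_j`) and fails for odd `k`, where `u_k ≡ 3 mod 8`.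
-/

namespace Int

theorem not_isSquare_of_emod_eq {M : ℕ} {x c : ℤ} (hx : x % M = c)
    (hM : ∀ z : ZMod M, z ^ 2 ≠ c) : ¬ IsSquare x := by
  rintro ⟨y, rfl⟩
  apply hM y
  rw [← hx, ZMod.intCast_mod]
  push_cast
  ring

theorem sq_ne_of_forall_zmod {M : ℕ} {a b c : ℤ}
    (hM : ∀ p q : ZMod M, q ^ 2 ≠ a * p ^ 4 + b * p ^ 2 + c) (r s : ℤ) :
    s ^ 2 ≠ a * r ^ 4 + b * r ^ 2 + c := fun h ↦
  hM r s (by exact_mod_cast congrArg (Int.cast : ℤ → ZMod M) h)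

theorem exists_eq_sq_of_isCoprime_of_mul_eq_sq {a b c : ℤ} (ha : 0 ≤ a) (hab : IsCoprime a b)
    (h : a * b = c ^ 2) : ∃ r, a = r ^ 2 := by
  obtain ⟨r, hr | hr⟩ := Int.sq_of_isCoprime hab h
  · exact ⟨r, hr⟩
  · exact ⟨r, by linarith [sq_nonneg r]⟩

theorem exists_eq_mul_sq_of_mul_eq_sq {a b c : ℤ} (ha : 0 < a) (h : a * b = c ^ 2) :
    ∃ d r t : ℤ, 0 < d ∧ a = d * r ^ 2 ∧ b = d * t ^ 2 := by
  obtain ⟨g, a, b, hg, hab, rfl, rfl⟩ := Int.exists_gcd_one' (Int.gcd_pos_of_ne_zero_left b ha.ne')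
  have hg : (0 : ℤ) < g := by exact_mod_cast hg
  have hab : IsCoprime a b := Int.isCoprime_iff_gcd_eq_one.mpr hab
  obtain ⟨c, rfl⟩ : (g : ℤ) ∣ c :=
    (Int.pow_dvd_pow_iff two_ne_zero).mp ⟨a * b, by rw [← h]; ring⟩
  have h : a * b = c ^ 2 :=
    mul_left_cancel₀ (pow_ne_zero 2 hg.ne') (by linear_combination h)
  have ha : 0 < a := pos_of_mul_pos_left ha hg.le
  have hb : 0 ≤ b := nonneg_of_mul_nonneg_right (h ▸ sq_nonneg c) ha
  obtain ⟨r, rfl⟩ := exists_eq_sq_of_isCoprime_of_mul_eq_sq ha.le hab h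
  obtain ⟨t, rfl⟩ := exists_eq_sq_of_isCoprime_of_mul_eq_sq hb hab.symm (by rw [mul_comm, h])
  exact ⟨g, r, t, hg, by ring, by ring⟩

end Int

namespace AlphaFive

theorem mem_Icc_of_neg_of_nonneg {X : ℤ} (hX : X < 0) (h : 0 ≤ X * (X ^ 2 + 100 * X + 750)) :
    -91 ≤ X ∧ X ≤ -9 := by
  have hQ := nonpos_of_mul_nonneg_right h hX
  constructor <;> nlinarith

theorem eq_neg_fiftyFour_of_isSquare {X : ℤ} (h₁ : -91 ≤ X) (h₂ : X ≤ -9)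
    (h : IsSquare (X * (X ^ 2 + 100 * X + 750))) : X = -54 := by
  interval_cases X <;> norm_num at h; rfl

def ε : Pell.Solution₁ 30 := .mk 11 2 (by norm_num)

def u (n : ℕ) : ℤ := (ε ^ n).x

def v (n : ℕ) : ℤ := (ε ^ n).y

@[simp] theorem u_zero : u 0 = 1 := by simp [u]

@[simp] theorem v_zero : v 0 = 0 := by simp [v]

theorem u_succ (n : ℕ) : u (n + 1) = 11 * u n + 60 * v n := by
  simp only [u, v, pow_succ, Pell.Solution₁.x_mul, ε, Pell.Solution₁.x_mk, Pell.Solution₁.y_mk]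
  ring

theorem v_succ (n : ℕ) : v (n + 1) = 2 * u n + 11 * v n := by
  simp only [u, v, pow_succ, Pell.Solution₁.y_mul, ε, Pell.Solution₁.x_mk, Pell.Solution₁.y_mk]
  ring

theorem u_sq_sub_thirty_mul_v_sq (n : ℕ) : u n ^ 2 - 30 * v n ^ 2 = 1 := (ε ^ n).prop

theorem u_two_mul (n : ℕ) : u (2 * n) = 2 * u n ^ 2 - 1 := by
  show (ε ^ (2 * n)).x = 2 * (ε ^ n).x ^ 2 - 1
  rw [pow_mul', sq, Pell.Solution₁.x_mul]
  linear_combination -(ε ^ n).prop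

theorem v_two_mul (n : ℕ) : v (2 * n) = 2 * u n * v n := by
  show (ε ^ (2 * n)).y = 2 * (ε ^ n).x * (ε ^ n).y
  rw [pow_mul', sq, Pell.Solution₁.y_mul]
  ring

theorem u_pos (n : ℕ) : 0 < u n := Pell.Solution₁.x_pow_pos (by simp [ε]) n

theorem v_nonneg (n : ℕ) : 0 ≤ v n := by
  cases n with
  | zero => simp
  | succ n => exact (Pell.Solution₁.y_pow_succ_pos (by simp [ε]) (by simp [ε]) n).le

theorem isCoprime_u_two_mul_v (n : ℕ) : IsCoprime (u n) (2 * v n) :=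
  ⟨u n, -15 * v n, by linear_combination u_sq_sub_thirty_mul_v_sq n⟩

theorem u_v_emod_of_parity (n : ℕ) :
    (n % 2 = 0 ∧ u n % 3 = 1 ∧ u n % 8 = 1 ∧ v n % 4 = 0) ∨
      (n % 2 = 1 ∧ u n % 3 = 2 ∧ u n % 8 = 3 ∧ v n % 4 = 2) := by
  induction n with
  | zero => simp
  | succ n ih =>
    rw [u_succ, v_succ]
    rcases ih with ⟨_, _, _, _⟩ | ⟨_, _, _, _⟩
    · exact .inr ⟨by omega, by omega, by omega, by omega⟩
    · exact .inl ⟨by omega, by omega, by omega, by omega⟩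

theorem u_emod_five (n : ℕ) : u n % 5 = 1 := by
  induction n with
  | zero => simp
  | succ n ih => rw [u_succ]; omega

theorem u_v_emod_twentyThree (n : ℕ) :
    (n % 3 = 0 ∧ u n % 23 = 1 ∧ v n % 23 = 0) ∨ (n % 3 = 1 ∧ u n % 23 = 11 ∧ v n % 23 = 2) ∨
      (n % 3 = 2 ∧ u n % 23 = 11 ∧ v n % 23 = 21) := by
  induction n with
  | zero => simp
  | succ n ih =>
    rw [u_succ, v_succ]
    rcases ih with ⟨_, _, _⟩ | ⟨_, _, _⟩ | ⟨_, _, _⟩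
    · exact .inr (.inl ⟨by omega, by omega, by omega⟩)
    · exact .inr (.inr ⟨by omega, by omega, by omega⟩)
    · exact .inl ⟨by omega, by omega, by omega⟩

theorem five_dvd_v_of_dvd_mul {n : ℕ} {k : ℤ} (hk : ¬ (5 : ℤ) ∣ k) (h : (5 : ℤ) ∣ k * u n * v n) :
    (5 : ℤ) ∣ v n := by
  have h5 : Prime (5 : ℤ) := Int.prime_iff_natAbs_prime.mpr (by norm_num)
  refine (h5.dvd_or_dvd h).resolve_left fun h' ↦ (h5.dvd_or_dvd h').elim hk fun hu ↦ ?_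
  have := u_emod_five n
  omega

theorem not_isSquare_u_of_odd {n : ℕ} (hn : n % 2 = 1) : ¬ IsSquare (u n) :=
  Int.not_isSquare_of_emod_eq (M := 8) (c := 3) (by have := u_v_emod_of_parity n; omega)
    (by decide)

theorem isSquare_u_of_mul_u_mul_v_eq {n : ℕ} {k f : ℤ} (hk₀ : 0 ≤ k) (hk : ¬ (5 : ℤ) ∣ k)
    (hcop : IsCoprime (u n) (k * v n)) (h : k * u n * v n = 5 * f ^ 2) :
    IsSquare (u n) ∧ ∃ b, k * v n = 5 * b ^ 2 := by
  obtain ⟨w, hw⟩ := five_dvd_v_of_dvd_mul hk ⟨f ^ 2, h⟩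
  have hw₀ : 0 ≤ k * w := mul_nonneg hk₀ (by linarith [v_nonneg n])
  have huw : u n * (k * w) = f ^ 2 := by rw [hw] at h; linarith
  have hcop : IsCoprime (u n) (k * w) := hcop.of_isCoprime_of_dvd_right ⟨5, by rw [hw]; ring⟩
  obtain ⟨e, he⟩ := Int.exists_eq_sq_of_isCoprime_of_mul_eq_sq (u_pos n).le hcop huw
  obtain ⟨b, hb⟩ := Int.exists_eq_sq_of_isCoprime_of_mul_eq_sq hw₀ hcop.symm (by rw [mul_comm, huw])
  exact ⟨⟨e, by rw [he, sq]⟩, b, by rw [hw, ← hb]; ring⟩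

theorem isSquare_u_of_v_two_mul_eq {m : ℕ} {f : ℤ} (h : v (2 * m) = 5 * f ^ 2) :
    IsSquare (u m) ∧ ∃ b, 2 * v m = 5 * b ^ 2 :=
  isSquare_u_of_mul_u_mul_v_eq (by norm_num) (by norm_num) (isCoprime_u_two_mul_v m)
    (by rw [← h, v_two_mul])

theorem isSquare_u_of_two_mul_v_two_mul_eq {m : ℕ} {f : ℤ} (h : 2 * v (2 * m) = 5 * f ^ 2) :
    IsSquare (u m) ∧ ∃ b, v m = 5 * b ^ 2 := by
  rw [v_two_mul] at h
  obtain ⟨f, rfl⟩ : (2 : ℤ) ∣ f := Int.prime_two.dvd_of_dvd_pow (n := 2) (by omega)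
  simpa using isSquare_u_of_mul_u_mul_v_eq (k := 1) (f := f) (by norm_num) (by norm_num)
    (by simpa using (isCoprime_u_two_mul_v m).of_isCoprime_of_dvd_right (dvd_mul_left _ 2))
    (by linarith)

theorem not_isSquare_u_and_v_eq {n : ℕ} (hn : 0 < n) :
    ¬ (IsSquare (u n) ∧ ∃ f, v n = 5 * f ^ 2) ∧ ¬ (IsSquare (u n) ∧ ∃ f, 2 * v n = 5 * f ^ 2) := by
  induction n using Nat.strong_induction_on with
  | _ n ih =>
    obtain ⟨m, rfl | rfl⟩ := Nat.even_or_odd' n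
    · have ihm := ih m (by omega) (by omega)
      exact ⟨fun ⟨_, _, hf⟩ ↦ ihm.2 (isSquare_u_of_v_two_mul_eq hf),
        fun ⟨_, _, hf⟩ ↦ ihm.1 (isSquare_u_of_two_mul_v_two_mul_eq hf)⟩
    · have hu := not_isSquare_u_of_odd (n := 2 * m + 1) (by omega)
      exact ⟨fun h ↦ hu h.1, fun h ↦ hu h.1⟩

theorem eq_of_sq_eq_of_le_sixteen {B s : ℤ} (hB : 0 ≤ B) (hs : 0 ≤ s) (hs₁₆ : s ≤ 16)
    (h : B ^ 2 = 30 * s ^ 2 + 70) : (B = 10 ∧ s = 1) ∨ (B = 50 ∧ s = 9) := by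
  have hsq : IsSquare (30 * s ^ 2 + 70) := ⟨B, by rw [← h, sq]⟩
  have hs : s = 1 ∨ s = 9 := by interval_cases s <;> norm_num at hsq <;> simp
  rcases hs with rfl | rfl
  · exact .inl ⟨by nlinarith, rfl⟩
  · exact .inr ⟨by nlinarith, rfl⟩

theorem exists_of_sq_eq_thirty_mul_sq_add_seventy {B s : ℤ} (hB : 0 ≤ B) (hs : 0 ≤ s)
    (h : B ^ 2 = 30 * s ^ 2 + 70) :
    ∃ n, (B = 10 * u n + 30 * v n ∧ s = u n + 10 * v n) ∨
      (B = 10 * u n - 30 * v n ∧ s = 10 * v n - u n) := by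
  induction hk : s.toNat using Nat.strong_induction_on generalizing B s with
  | _ k ih =>
    by_cases hs₁₆ : s ≤ 16
    · rcases eq_of_sq_eq_of_le_sixteen hB hs hs₁₆ h with ⟨rfl, rfl⟩ | ⟨rfl, rfl⟩
      · exact ⟨0, .inl (by simp)⟩
      · exact ⟨1, .inr (by simp [u_succ, v_succ])⟩
    -- multiplication by `ε⁻¹ = 11 - 2√30` decreases `s` as long as `s ≥ 17`
    have hB' : 0 ≤ 11 * B - 60 * s := by nlinarith
    have hs' : 0 ≤ 11 * s - 2 * B := by nlinarith
    have hlt : 11 * s - 2 * B < s := by nlinarith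
    obtain ⟨n, hn⟩ := ih _ (by omega) hB' hs' (by linear_combination h) rfl
    refine ⟨n + 1, ?_⟩
    rw [u_succ, v_succ]
    rcases hn with ⟨h₁, h₂⟩ | ⟨h₁, h₂⟩
    · exact .inl ⟨by linarith, by linarith⟩
    · exact .inr ⟨by linarith, by linarith⟩

theorem exists_of_fifteen_mul_eq {σ g : ℤ} (hσ : σ = 1 ∨ σ = -1) (hg : 0 < g) (hsq : IsSquare g)
    {n : ℕ} (h : 15 * g = u n + 3 * (σ * v n) - 1) :
    ∃ m b c, 0 < m ∧ 2 * v m = 5 * b ^ 2 ∧ 25 * b ^ 2 + σ * u m = c ^ 2 := by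
  have hσ₂ : σ ^ 2 = 1 := by rcases hσ with rfl | rfl <;> norm_num
  obtain ⟨m, rfl⟩ : ∃ m, n = 2 * m := ⟨n / 2, by have := u_v_emod_of_parity n; omega⟩
  rw [u_two_mul, v_two_mul] at h
  have h₅ : 5 * g = 20 * v m ^ 2 + σ * (2 * u m * v m) := by
    linarith [u_sq_sub_thirty_mul_v_sq m]
  obtain ⟨w, hw⟩ := five_dvd_v_of_dvd_mul (k := 2 * σ) (by rcases hσ with rfl | rfl <;> decide)
    ⟨g - 4 * v m ^ 2, by linear_combination -h₅⟩
  have hw₀ : 0 ≤ w := by linarith [v_nonneg m]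
  obtain ⟨r, rfl⟩ := hsq
  have hg : (2 * w) * (50 * w + σ * u m) = r ^ 2 := by
    rw [hw] at h₅; linarith
  have hcop : IsCoprime (2 * w) (50 * w + σ * u m) :=
    ⟨-25 * σ * u m - 375 * w, σ * u m, by
      linear_combination u m ^ 2 * hσ₂ + u_sq_sub_thirty_mul_v_sq m + 30 * (v m + 5 * w) * hw⟩
  have hpos : 0 < 50 * w + σ * u m := by nlinarith
  obtain ⟨b, hb⟩ := Int.exists_eq_sq_of_isCoprime_of_mul_eq_sq (by positivity) hcop hg
  obtain ⟨c, hc⟩ := Int.exists_eq_sq_of_isCoprime_of_mul_eq_sq hpos.le hcop.symm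
    (by rw [mul_comm, hg])
  refine ⟨m, b, c, Nat.pos_of_ne_zero ?_, by rw [hw, ← hb]; ring, by rw [← hc, ← hb]; ring⟩
  rintro rfl
  simp only [v_zero] at hw
  nlinarith

theorem twentyFive_mul_sq_add_u_ne_sq {m : ℕ} {b : ℤ} (hm : 0 < m)
    (hb : 2 * v m = 5 * b ^ 2) (c : ℤ) : 25 * b ^ 2 + u m ≠ c ^ 2 := by
  intro hc
  obtain ⟨t, rfl | rfl⟩ := Nat.even_or_odd' m
  · exact (not_isSquare_u_and_v_eq (n := t) (by omega)).1
      (isSquare_u_of_two_mul_v_two_mul_eq hb)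
  · refine Int.not_isSquare_of_emod_eq (M := 8) (c := 7) (x := c ^ 2) ?_ (by decide) ⟨c, sq c⟩
    have := u_v_emod_of_parity (2 * t + 1)
    omega

theorem twentyFive_mul_sq_sub_u_ne_sq {m : ℕ} {b : ℤ} (hb : 2 * v m = 5 * b ^ 2) (c : ℤ) :
    25 * b ^ 2 - u m ≠ c ^ 2 := by
  intro hc
  rcases u_v_emod_twentyThree m with ⟨_, _, _⟩ | ⟨_, _, _⟩ | ⟨_, _, _⟩
  · exact Int.not_isSquare_of_emod_eq (M := 23) (c := 22) (by omega) (by decide) ⟨c, sq c⟩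
  · exact Int.not_isSquare_of_emod_eq (M := 23) (c := 10) (by omega) (by decide) ⟨b, sq b⟩
  · exact Int.not_isSquare_of_emod_eq (M := 23) (c := 15) (by omega) (by decide) ⟨c, sq c⟩

theorem sq_ne_quartic_750 {r : ℤ} (hr : r ≠ 0) (t : ℤ) :
    t ^ 2 ≠ 750 * r ^ 4 + 100 * r ^ 2 + 1 := by
  intro h
  have hg : 0 < r ^ 2 := by positivity
  have hB : (150 * r ^ 2 + 10) ^ 2 = 30 * |t| ^ 2 + 70 := by
    rw [sq_abs]; linear_combination -30 * h
  obtain ⟨n, ⟨hn, -⟩ | ⟨hn, -⟩⟩ :=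
    exists_of_sq_eq_thirty_mul_sq_add_seventy (by positivity) (abs_nonneg t) hB
  · obtain ⟨m, b, c, hm, hb, hc⟩ :=
      exists_of_fifteen_mul_eq (σ := 1) (.inl rfl) hg ⟨r, sq r⟩ (n := n) (by linarith)
    exact twentyFive_mul_sq_add_u_ne_sq hm hb c (by linarith)
  · obtain ⟨m, b, c, -, hb, hc⟩ :=
      exists_of_fifteen_mul_eq (σ := -1) (.inr rfl) hg ⟨r, sq r⟩ (n := n) (by linarith)
    exact twentyFive_mul_sq_sub_u_ne_sq hb c (by linarith)

theorem sq_ne_quartic_30 {r : ℤ} (hr : r ≠ 0) (t : ℤ) :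
    t ^ 2 ≠ 30 * r ^ 4 + 100 * r ^ 2 + 25 := by
  intro h
  have h5 : Prime (5 : ℤ) := Int.prime_iff_natAbs_prime.mpr (by norm_num)
  obtain ⟨t, rfl⟩ : (5 : ℤ) ∣ t :=
    h5.dvd_of_dvd_pow (n := 2) ⟨6 * r ^ 4 + 20 * r ^ 2 + 5, by linarith⟩
  obtain ⟨r, rfl⟩ : (5 : ℤ) ∣ r := by
    refine h5.dvd_of_dvd_pow (n := 4) ((h5.dvd_or_dvd (a := 6) ?_).resolve_left (by decide))
    exact ⟨t ^ 2 - 4 * r ^ 2 - 1, by linarith⟩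
  exact sq_ne_quartic_750 (right_ne_zero_of_mul hr) t (by linarith)

set_option maxRecDepth 10000 in
theorem sq_ne_quartic_of_dvd {d r : ℤ} (hd : 0 < d) (hdvd : d ∣ 750) (hr : r ≠ 0) (t : ℤ) :
    t ^ 2 ≠ d * r ^ 4 + 100 * r ^ 2 + 750 / d := by
  intro h
  lift d to ℕ using hd.le
  have hmem : d ∈ Nat.divisors 750 := Nat.mem_divisors.mpr ⟨by exact_mod_cast hdvd, by norm_num⟩
  -- `d = 1, 2, 3, 5, 6, 10, 15, 25, 30, 50, 75, 125, 150, 250, 375, 750`, in this order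
  fin_cases hmem
  · exact Int.sq_ne_of_forall_zmod (M := 4) (by decide) r t h
  · exact Int.sq_ne_of_forall_zmod (M := 8) (by decide) r t h
  · exact Int.sq_ne_of_forall_zmod (M := 49) (by decide) r t h
  · exact Int.sq_ne_of_forall_zmod (M := 4) (by decide) r t h
  · exact Int.sq_ne_of_forall_zmod (M := 8) (by decide) r t h
  · exact Int.sq_ne_of_forall_zmod (M := 9) (by decide) r t h
  · exact Int.sq_ne_of_forall_zmod (M := 8) (by decide) r t h
  · exact Int.sq_ne_of_forall_zmod (M := 4) (by decide) r t h
  · exact sq_ne_quartic_30 hr t (by simpa using h)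
  · exact Int.sq_ne_of_forall_zmod (M := 8) (by decide) r t h
  · exact Int.sq_ne_of_forall_zmod (M := 25) (by decide) r t h
  · exact Int.sq_ne_of_forall_zmod (M := 4) (by decide) r t h
  · exact Int.sq_ne_of_forall_zmod (M := 8) (by decide) r t h
  · exact Int.sq_ne_of_forall_zmod (M := 5) (by decide) r t h
  · exact Int.sq_ne_of_forall_zmod (M := 5) (by decide) r t h
  · exact sq_ne_quartic_750 hr t (by simpa using h)

theorem sq_ne_of_pos {X : ℤ} (hX : 0 < X) (Y : ℤ) : Y ^ 2 ≠ X * (X ^ 2 + 100 * X + 750) := by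
  intro h
  obtain ⟨d, r, t, hd, hXd, hQd⟩ := Int.exists_eq_mul_sq_of_mul_eq_sq hX h.symm
  obtain ⟨e, he⟩ : d ∣ 750 := ⟨t ^ 2 - r ^ 2 * (X + 100), by linear_combination hQd - (X + 100) * hXd⟩
  have hr : r ≠ 0 := by rintro rfl; simp [hXd] at hX
  refine sq_ne_quartic_of_dvd hd ⟨e, he⟩ hr t ?_
  rw [he, Int.mul_ediv_cancel_left _ hd.ne']
  refine mul_left_cancel₀ hd.ne' ?_
  linear_combination -hQd + (d * r ^ 2 + X + 100) * hXd + he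

end AlphaFive

theorem integral_points_alpha_five (X Y : ℤ) :
    Y^2 = X * (X^2 + 100*X + 750) ↔
      (X, Y) = (-54, 306) ∨ (X, Y) = (-54, -306) ∨ (X, Y) = (0, 0) := by
  refine ⟨fun h ↦ ?_, by rintro (h | h | h) <;> cases h <;> norm_num⟩
  rcases lt_trichotomy X 0 with hX | rfl | hX
  · obtain ⟨h₁, h₂⟩ := AlphaFive.mem_Icc_of_neg_of_nonneg hX (h ▸ sq_nonneg Y)
    obtain rfl := AlphaFive.eq_neg_fiftyFour_of_isSquare h₁ h₂ ⟨Y, by rw [← h, sq]⟩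
    have hY : (Y - 306) * (Y + 306) = 0 := by linear_combination h
    rcases mul_eq_zero.mp hY with hY | hY
    · exact .inl (by rw [show Y = 306 by linarith])
    · exact .inr (.inl (by rw [show Y = -306 by linarith]))
  · exact .inr (.inr (by simp_all))
  · exact (AlphaFive.sq_ne_of_pos hX Y h).elim
end

section
/- The only integral point (X, Y) ∈ ℤ × ℤ on the elliptic curve Y^2 = X(X^2 + 200X + 3000) is (0, 0). -/
/-!
The gcd of `X` and `X² + 200X + 3000` divides 3000, so a point with `X ≠ 0` gives coprime `u, v`
and `d ∣ 3000` with `X = d u²` and `v² = d u⁴ + 200 u² + 3000 / d`. For `d ≠ 1, 3000` this quartic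
has solutions modulo 8 or modulo 25 only with `2 ∣ u, v` or `5 ∣ u, v`. For `d = 1`,
`(u² + 100)² - v² = 7000` leaves finitely many candidates. For `d = 3000`, `s = 30u² + 1` satisfies
`10s² - 3v² = 7`, hence `s = x ± 6y` where `x + y√120 = (11 + √120)ⁿ`. Modulo 3 the exponent `n`
is even, and then `5u² = 2y'(20y' ± x')` for the half power `x' + y'√120`; this starts an infinite
descent on `n` preserving "`y = 10c²`, or `y = 5c²` and `x` is a square".
-/

theorem Int.exists_eq_sq_of_isCoprime_of_nonneg {a b c : ℤ} (hab : IsCoprime a b) (ha : 0 ≤ a)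
    (h : a * b = c ^ 2) : ∃ d, a = d ^ 2 := by
  obtain ⟨d, hd | hd⟩ := Int.sq_of_isCoprime hab h
  · exact ⟨d, hd⟩
  · exact ⟨0, by nlinarith [sq_nonneg d]⟩

theorem Int.exists_eq_mul_sq_of_mul_eq_mul_sq {p a b c : ℤ} (hp : 0 < p) (ha : 0 ≤ a) (hb : 0 ≤ b)
    (hab : IsCoprime a b) (hpb : IsCoprime p b) (h : a * b = p * c ^ 2) :
    (∃ d, a = p * d ^ 2) ∧ ∃ e, b = e ^ 2 := by
  obtain ⟨a, rfl⟩ := hpb.dvd_of_dvd_mul_right ⟨c ^ 2, h⟩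
  have h' : a * b = c ^ 2 := mul_left_cancel₀ hp.ne' (by rw [← h]; ring)
  have hab' : IsCoprime a b := hab.of_isCoprime_of_dvd_left (dvd_mul_left a p)
  obtain ⟨d, rfl⟩ := Int.exists_eq_sq_of_isCoprime_of_nonneg hab' (by nlinarith) h'
  exact ⟨⟨d, rfl⟩, Int.exists_eq_sq_of_isCoprime_of_nonneg hab'.symm hb (by rw [mul_comm, h'])⟩

theorem Int.exists_eq_ten_mul_sq_of_two_mul_eq {y d : ℤ} (h : 2 * y = 5 * d ^ 2) :
    ∃ k, y = 10 * k ^ 2 := by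
  obtain ⟨k, rfl⟩ : Even d := by
    have : Even (5 * d ^ 2) := ⟨y, by rw [← h]; ring⟩
    simpa [Int.even_pow' two_ne_zero, show ¬Even (5 : ℤ) by decide] using Int.even_mul.mp this
  exact ⟨k, by linarith⟩

theorem exists_quartic_of_sq_eq_mul {a b X Y : ℤ} (hX : X ≠ 0)
    (h : Y ^ 2 = X * (X ^ 2 + a * X + b)) :
    ∃ d e u v : ℤ, d * e = b ∧ IsCoprime u v ∧ X = d * u ^ 2 ∧
      v ^ 2 = d * u ^ 4 + a * u ^ 2 + e := by
  obtain ⟨g, m, n, hg, hmn, hXm, hQn⟩ :=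
    Int.exists_gcd_one' (Int.gcd_pos_of_ne_zero_left (X ^ 2 + a * X + b) hX)
  have hcop : IsCoprime m n := Int.isCoprime_iff_gcd_eq_one.mpr hmn
  have hg0 : (g : ℤ) ≠ 0 := by positivity
  rw [hQn, hXm] at h
  obtain ⟨y, rfl⟩ : (g : ℤ) ∣ Y := (Int.pow_dvd_pow_iff two_ne_zero).mp ⟨m * n, by rw [h]; ring⟩
  have hy : m * n = y ^ 2 := mul_left_cancel₀ (pow_ne_zero 2 hg0) (by linear_combination -h)
  have hm0 : m ≠ 0 := by rintro rfl; simp [hXm] at hX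
  obtain ⟨r, hr⟩ := Int.sq_of_isCoprime hcop hy
  obtain ⟨t, ht⟩ := Int.sq_of_isCoprime hcop.symm (by rw [mul_comm, hy])
  have hr0 : r ≠ 0 := by rintro rfl; rcases hr with hr | hr <;> simp [hr] at hm0
  have hmix : m * n = -(r * t) ^ 2 → t = 0 := fun hneg => by
    have : (r * t) ^ 2 = 0 := by nlinarith [sq_nonneg y, sq_nonneg (r * t)]
    exact (mul_eq_zero.mp (pow_eq_zero_iff two_ne_zero |>.mp this)).resolve_left hr0
  obtain ⟨s, hms, hns⟩ : ∃ s : ℤ, m = s * r ^ 2 ∧ n = s * t ^ 2 := by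
    rcases hr with hr | hr <;> rcases ht with ht | ht
    · exact ⟨1, by rw [hr]; ring, by rw [ht]; ring⟩
    · obtain rfl := hmix (by rw [hr, ht]; ring)
      exact ⟨1, by rw [hr]; ring, by rw [ht]; ring⟩
    · obtain rfl := hmix (by rw [hr, ht]; ring)
      exact ⟨-1, by rw [hr]; ring, by rw [ht]; ring⟩
    · exact ⟨-1, by rw [hr]; ring, by rw [ht]; ring⟩
  refine ⟨s * g, t ^ 2 - s * g * r ^ 4 - a * r ^ 2, r, t, ?_, ?_, by rw [hXm, hms]; ring, by ring⟩
  · rw [hXm, hms, hns] at hQn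
    linear_combination -hQn
  · rw [hms, hns] at hcop
    exact (hcop.of_isCoprime_of_dvd_left ⟨s * r, by ring⟩).of_isCoprime_of_dvd_right
      ⟨s * t, by ring⟩

def QuarticSolutionsModDvd (m p : ℕ) (a b c : ℤ) : Prop :=
  ∀ x y : ZMod m, y ^ 2 = a * x ^ 4 + b * x ^ 2 + c → p ∣ x.val ∧ p ∣ y.val

instance {m : ℕ} [NeZero m] {p : ℕ} {a b c : ℤ} : Decidable (QuarticSolutionsModDvd m p a b c) :=
  by unfold QuarticSolutionsModDvd; infer_instance

theorem QuarticSolutionsModDvd.not_isCoprime {m p : ℕ} [NeZero m] {a b c u v : ℤ}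
    (H : QuarticSolutionsModDvd m p a b c) (hpm : p ∣ m) (hp : p ≠ 1)
    (h : v ^ 2 = a * u ^ 4 + b * u ^ 2 + c) : ¬ IsCoprime u v := by
  have hdvd : ∀ z : ℤ, p ∣ (z : ZMod m).val → (p : ℤ) ∣ z := fun z hz => by
    have : (p : ℤ) ∣ z % m := by rw [← ZMod.val_intCast]; exact_mod_cast hz
    rwa [Int.dvd_iff_emod_eq_zero, ← Int.emod_emod_of_dvd z (Int.natCast_dvd_natCast.mpr hpm),
      ← Int.dvd_iff_emod_eq_zero]
  obtain ⟨hu, hv⟩ := H u v (by exact_mod_cast congrArg (Int.cast : ℤ → ZMod m) h)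
  intro huv
  have := Int.isUnit_iff.mp (huv.isUnit_of_dvd' (hdvd u hu) (hdvd v hv))
  omega

namespace Pell

namespace Solution₁

variable {d : ℤ}

theorem x_mul_self (a : Solution₁ d) : (a * a).x = 1 + 2 * d * a.y ^ 2 := by
  rw [x_mul]; linear_combination a.prop

theorem y_mul_self (a : Solution₁ d) : (a * a).y = 2 * a.x * a.y := by
  rw [y_mul]; ring

theorem isCoprime_x_y (a : Solution₁ d) : IsCoprime a.x a.y :=
  ⟨a.x, -d * a.y, by linear_combination a.prop⟩

theorem isCoprime_x_of_dvd {p : ℤ} (hp : p ∣ d) (a : Solution₁ d) : IsCoprime p a.x := by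
  obtain ⟨k, rfl⟩ := hp
  exact ⟨-k * a.y ^ 2, a.x, by linear_combination a.prop⟩

end Solution₁

def fund120 : Solution₁ 120 := .mk 11 1 (by norm_num)

@[simp] theorem x_fund120 : fund120.x = 11 := Solution₁.x_mk ..

@[simp] theorem y_fund120 : fund120.y = 1 := Solution₁.y_mk ..

local notation "ε" => fund120

theorem isFundamental_fund120 : IsFundamental ε := by
  refine ⟨by simp, by simp, fun {b} hb => ?_⟩
  have hb' := b.prop
  rw [x_fund120]
  rcases eq_or_ne b.y 0 with hy | hy
  · rw [hy] at hb'; nlinarith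
  · have : 1 ≤ b.y ^ 2 := by have := pow_pos (abs_pos.mpr hy) 2; rw [sq_abs] at this; omega
    nlinarith

theorem x_fund120_pow_pos (n : ℕ) : 0 < (ε ^ n).x :=
  Solution₁.x_pow_pos (by simp) n

theorem y_fund120_pow_nonneg (n : ℕ) : 0 ≤ (ε ^ n).y := by
  cases n with
  | zero => simp
  | succ n => exact (Solution₁.y_pow_succ_pos (by simp) (by simp) n).le

theorem x_fund120_mul_mul_self (a : Solution₁ 120) :
    (ε * (a * a)).x = 11 + 240 * (11 * a.y ^ 2 + a.x * a.y) := by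
  rw [Solution₁.x_mul, Solution₁.x_mul_self, Solution₁.y_mul_self, x_fund120, y_fund120]; ring

theorem y_fund120_mul_mul_self (a : Solution₁ 120) :
    (ε * (a * a)).y = 2 * (11 * a.x * a.y + 120 * a.y ^ 2) + 1 := by
  rw [Solution₁.y_mul, Solution₁.x_mul_self, Solution₁.y_mul_self, x_fund120, y_fund120]; ring

theorem pow_two_mul_eq (j : ℕ) : ε ^ (2 * j) = ε ^ j * ε ^ j := by
  rw [two_mul, pow_add]

theorem pow_two_mul_add_one_eq (j : ℕ) : ε ^ (2 * j + 1) = ε * (ε ^ j * ε ^ j) := by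
  rw [pow_succ', pow_two_mul_eq]

theorem eq_zero_of_y_fund120_pow_eq_mul_sq {n : ℕ}
    (h : (∃ c, (ε ^ n).y = 10 * c ^ 2) ∨ (∃ c, (ε ^ n).y = 5 * c ^ 2) ∧ ∃ g, (ε ^ n).x = g ^ 2) :
    n = 0 := by
  induction n using Nat.strong_induction_on with
  | _ n ih =>
  obtain ⟨j, rfl | rfl⟩ := Nat.even_or_odd' n
  · rcases j.eq_zero_or_pos with rfl | hj
    · rfl
    suffices j = 0 by omega
    have hx := x_fund120_pow_pos j
    have hy := y_fund120_pow_nonneg j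
    have hcop := (ε ^ j).isCoprime_x_y
    have h5 : IsCoprime (5 : ℤ) (ε ^ j).x := Solution₁.isCoprime_x_of_dvd (by norm_num) _
    have h2 : IsCoprime (2 : ℤ) (ε ^ j).x := Solution₁.isCoprime_x_of_dvd (by norm_num) _
    rw [pow_two_mul_eq, Solution₁.y_mul_self] at h
    refine ih j (by omega) ?_
    rcases h with ⟨c, hc⟩ | ⟨⟨c, hc⟩, -⟩
    · obtain ⟨hy5, hx⟩ := Int.exists_eq_mul_sq_of_mul_eq_mul_sq (by norm_num) hy hx.le hcop.symm h5
        (by linarith)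
      exact Or.inr ⟨hy5, hx⟩
    · obtain ⟨⟨d, hd⟩, -⟩ := Int.exists_eq_mul_sq_of_mul_eq_mul_sq (a := 2 * (ε ^ j).y)
        (by norm_num) (by positivity) hx.le (h2.mul_left hcop.symm) h5 (by linarith)
      exact Or.inl (Int.exists_eq_ten_mul_sq_of_two_mul_eq hd)
  · exfalso
    rw [pow_two_mul_add_one_eq, x_fund120_mul_mul_self, y_fund120_mul_mul_self] at h
    rcases h with ⟨c, hc⟩ | ⟨-, ⟨g, hg⟩⟩
    · omega
    · rcases Int.even_or_odd g with ⟨k, rfl⟩ | hodd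
      · ring_nf at hg; omega
      · have := Int.sq_mod_four_eq_one_of_odd hodd; omega

theorem exists_fund120_pow_of_ten_mul_sq_sub_three_mul_sq {s b : ℤ} (hs : 0 < s)
    (h : 10 * s ^ 2 - 3 * b ^ 2 = 7) :
    ∃ n : ℕ, s = (ε ^ n).x + 6 * (ε ^ n).y ∨ s = (ε ^ n).x - 6 * (ε ^ n).y := by
  -- `s √10 ± b √3 = (x + y √120) (√10 + √3)` with `y = k`, `x = s - 6k`, `±b = s + 14k`
  obtain ⟨k, hk⟩ : ∃ k, 10 * s ^ 2 - 3 * (s + 14 * k) ^ 2 = 7 := by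
    have hmod : ∀ s b : ZMod 28, 10 * s ^ 2 - 3 * b ^ 2 = 7 →
        2 * (b - s) = 0 ∨ 2 * (b + s) = 0 := by
      decide
    rcases hmod s b (by exact_mod_cast congrArg (Int.cast : ℤ → ZMod 28) h) with h28 | h28
    · obtain ⟨k, hk⟩ :=
        (ZMod.intCast_zmod_eq_zero_iff_dvd (2 * (b - s)) 28).mp (by exact_mod_cast h28)
      exact ⟨k, by rw [← h, show b = s + 14 * k by push_cast at hk; linarith]⟩
    · obtain ⟨k, hk⟩ :=
        (ZMod.intCast_zmod_eq_zero_iff_dvd (2 * (b + s)) 28).mp (by exact_mod_cast h28)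
      exact ⟨-k, by rw [← h, show b = -(s + 14 * -k) by push_cast at hk; linarith]; ring⟩
  have hpell : (s - 6 * k) ^ 2 - 120 * k ^ 2 = 1 :=
    mul_left_cancel₀ (by norm_num : (7 : ℤ) ≠ 0) (by linear_combination hk)
  have hx : 0 < s - 6 * k := by nlinarith
  rcases le_or_gt 0 k with hk0 | hk0
  · obtain ⟨n, hn⟩ := isFundamental_fund120.eq_pow_of_nonneg (a := .mk _ _ hpell) hx hk0
    refine ⟨n, Or.inl ?_⟩
    rw [← hn, Solution₁.x_mk, Solution₁.y_mk]; ring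
  · obtain ⟨n, hn⟩ := isFundamental_fund120.eq_pow_of_nonneg (a := (Solution₁.mk _ _ hpell)⁻¹)
      (by rwa [Solution₁.x_inv]) (by rw [Solution₁.y_inv]; simpa using hk0.le)
    refine ⟨n, Or.inr ?_⟩
    rw [← hn, Solution₁.x_inv, Solution₁.y_inv, Solution₁.x_mk, Solution₁.y_mk]; ring

theorem y_fund120_pow_eq_zero_of_two_mul_mul_eq {j : ℕ} {t w : ℤ}
    (ht : t = (ε ^ j).x ∨ t = -(ε ^ j).x) (h : 2 * (ε ^ j).y * (20 * (ε ^ j).y + t) = 5 * w ^ 2) :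
    (ε ^ j).y = 0 := by
  obtain ⟨h2, h5⟩ : IsCoprime (2 * (ε ^ j).y) t ∧ IsCoprime 5 t := by
    have h2 := (Solution₁.isCoprime_x_of_dvd (by norm_num : (2 : ℤ) ∣ 120) (ε ^ j)).mul_left
      (ε ^ j).isCoprime_x_y.symm
    have h5 := Solution₁.isCoprime_x_of_dvd (by norm_num : (5 : ℤ) ∣ 120) (ε ^ j)
    rcases ht with rfl | rfl
    · exact ⟨h2, h5⟩
    · exact ⟨h2.neg_right, h5.neg_right⟩
  by_contra hy
  have hy0 : 0 < (ε ^ j).y := (y_fund120_pow_nonneg j).lt_of_ne' hy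
  have hb : 0 ≤ 20 * (ε ^ j).y + t := by nlinarith [sq_nonneg w]
  obtain ⟨⟨d, hd⟩, -⟩ := Int.exists_eq_mul_sq_of_mul_eq_mul_sq (by norm_num) (by positivity) hb
    (by rw [show 20 * (ε ^ j).y + t = t + 2 * (ε ^ j).y * 10 by ring]
        exact h2.add_mul_left_right _)
    (by rw [show 20 * (ε ^ j).y + t = t + 5 * (4 * (ε ^ j).y) by ring]
        exact h5.add_mul_left_right _)
    h
  obtain rfl : j = 0 :=
    eq_zero_of_y_fund120_pow_eq_mul_sq (Or.inl (Int.exists_eq_ten_mul_sq_of_two_mul_eq hd))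
  simp at hy

theorem eq_zero_of_sq_eq_quartic_3000 {u v : ℤ} (h : v ^ 2 = 3000 * u ^ 4 + 200 * u ^ 2 + 1) :
    u = 0 := by
  obtain ⟨n, hn⟩ := exists_fund120_pow_of_ten_mul_sq_sub_three_mul_sq (s := 30 * u ^ 2 + 1)
    (b := v) (by positivity) (by linear_combination -3 * h)
  obtain ⟨j, rfl | rfl⟩ := Nat.even_or_odd' n
  · rw [pow_two_mul_eq, Solution₁.x_mul_self, Solution₁.y_mul_self] at hn
    have hy : (ε ^ j).y = 0 := by
      rcases hn with hn | hn
      · exact y_fund120_pow_eq_zero_of_two_mul_mul_eq (Or.inl rfl) (w := u)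
          (mul_left_cancel₀ (by norm_num : (6 : ℤ) ≠ 0) (by linear_combination -hn))
      · exact y_fund120_pow_eq_zero_of_two_mul_mul_eq (Or.inr rfl) (w := u)
          (mul_left_cancel₀ (by norm_num : (6 : ℤ) ≠ 0) (by linear_combination -hn))
    rw [hy] at hn
    have : u ^ 2 = 0 := by rcases hn with hn | hn <;> linarith
    exact pow_eq_zero_iff two_ne_zero |>.mp this
  · rw [pow_two_mul_add_one_eq, x_fund120_mul_mul_self, y_fund120_mul_mul_self] at hn
    omega

end Pell

theorem sq_ne_quartic_one (u v : ℤ) : v ^ 2 ≠ u ^ 4 + 200 * u ^ 2 + 3000 := by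
  intro h
  have key : ∀ D ∈ Nat.divisorsAntidiagonal 7000, ∀ n < 100, 2 * (n ^ 2 + 100) ≠ D.1 + D.2 := by
    decide +kernel
  -- `(u ^ 2 + 100 - |v|) (u ^ 2 + 100 + |v|) = 7000`
  have h' : v.natAbs ^ 2 + 7000 = (u.natAbs ^ 2 + 100) ^ 2 := by
    zify; rw [sq_abs, sq_abs]; linear_combination h
  obtain ⟨D, hD⟩ : ∃ D, u.natAbs ^ 2 + 100 = v.natAbs + D :=
    ⟨_, (Nat.add_sub_of_le (by nlinarith)).symm⟩
  rw [hD] at h'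
  have hDE : D * (D + 2 * v.natAbs) = 7000 := by linarith
  have hD0 : 1 ≤ D := by nlinarith
  have hE : D + 2 * v.natAbs ≤ 7000 := by nlinarith
  have hu : u.natAbs ^ 2 ≤ 6900 := by omega
  exact key (D, D + 2 * v.natAbs) (Nat.mem_divisorsAntidiagonal.mpr ⟨hDE, by norm_num⟩)
    u.natAbs (by nlinarith) (by simp only; rw [hD]; ring)

theorem quarticSolutionsModDvd_of_mul_eq {d e : ℤ} (hde : d * e = 3000) (hd1 : d ≠ 1)
    (hd3000 : d ≠ 3000) :
    QuarticSolutionsModDvd 8 2 d 200 e ∨ QuarticSolutionsModDvd 25 5 d 200 e := by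
  have key : ∀ D ∈ Nat.divisorsAntidiagonal 3000, ∀ σ ∈ ({1, -1} : Finset ℤ),
      σ * D.1 ≠ 1 → σ * D.1 ≠ 3000 →
      QuarticSolutionsModDvd 8 2 (σ * D.1) 200 (σ * D.2) ∨
        QuarticSolutionsModDvd 25 5 (σ * D.1) 200 (σ * D.2) := by
    decide +kernel
  have hD : (d.natAbs, e.natAbs) ∈ Nat.divisorsAntidiagonal 3000 :=
    Nat.mem_divisorsAntidiagonal.mpr ⟨by rw [← Int.natAbs_mul, hde]; rfl, by norm_num⟩
  obtain ⟨σ, hσ, hdσ, heσ⟩ : ∃ σ ∈ ({1, -1} : Finset ℤ), d = σ * d.natAbs ∧ e = σ * e.natAbs := by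
    rcases Int.natAbs_eq d with hd | hd <;> rcases Int.natAbs_eq e with he | he
    · exact ⟨1, by simp, by simpa using hd, by simpa using he⟩
    · nlinarith [mul_nonneg (Int.natCast_nonneg d.natAbs) (Int.natCast_nonneg e.natAbs)]
    · nlinarith [mul_nonneg (Int.natCast_nonneg d.natAbs) (Int.natCast_nonneg e.natAbs)]
    · exact ⟨-1, by simp, by simpa using hd, by simpa using he⟩
  have := key _ hD σ hσ
  rw [← hdσ, ← heσ] at this
  exact this hd1 hd3000

theorem eq_zero_of_sq_eq_quartic {d e u v : ℤ} (hde : d * e = 3000) (huv : IsCoprime u v)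
    (h : v ^ 2 = d * u ^ 4 + 200 * u ^ 2 + e) : u = 0 := by
  by_cases hd1 : d = 1
  · subst hd1
    obtain rfl : e = 3000 := by linarith
    exact absurd (by linarith) (sq_ne_quartic_one u v)
  by_cases hd3000 : d = 3000
  · subst hd3000
    obtain rfl : e = 1 := by linarith
    exact Pell.eq_zero_of_sq_eq_quartic_3000 h
  rcases quarticSolutionsModDvd_of_mul_eq hde hd1 hd3000 with H | H
  · exact absurd huv (H.not_isCoprime (by norm_num) (by norm_num) h)
  · exact absurd huv (H.not_isCoprime (by norm_num) (by norm_num) h)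

theorem integral_points_alpha_ten (X Y : ℤ) :
    Y^2 = X * (X^2 + 200*X + 3000) ↔ (X, Y) = (0, 0) := by
  refine ⟨fun h => ?_, fun h => by simp only [Prod.mk.injEq] at h; rw [h.1, h.2]; ring⟩
  obtain rfl : X = 0 := by
    by_contra hX
    obtain ⟨d, e, u, v, hde, huv, rfl, hq⟩ := exists_quartic_of_sq_eq_mul hX h
    exact hX (by rw [eq_zero_of_sq_eq_quartic hde huv hq]; ring)
  simpa using h
end

section
/- There are no integers X, Y satisfying Y^2 = X^3 + 630. -/
/-!
Reducing modulo 8 forces `X ≡ 3 (mod 8)`. Since `630 + 2 * 51 ^ 2 = 18 ^ 3`, the equation reads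
`Y ^ 2 + 2 * 51 ^ 2 = (X + 18) * q` with `q = X ^ 2 - 18 * X + 324 ≡ 7 (mod 8)` positive.
A prime factor `p` of `q` is odd and, as `17 ∤ q`, either `p = 3` or `p ∤ 51`; in the latter case
`-2` is a square mod `p`, so `p ≡ 1, 3 (mod 8)`. Products of such primes are again `≡ 1, 3 (mod 8)`,
contradicting `q ≡ 7 (mod 8)`.
-/

theorem Nat.mod_eight_eq_one_or_three_of_forall_prime_dvd {n : ℕ} (hn : n ≠ 0)
    (h : ∀ p, p.Prime → p ∣ n → p % 8 = 1 ∨ p % 8 = 3) : n % 8 = 1 ∨ n % 8 = 3 := by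
  induction n using Nat.recOnMul with
  | zero => exact absurd rfl hn
  | one => left; rfl
  | prime p hp => exact h p hp dvd_rfl
  | mul a b iha ihb =>
    obtain ⟨ha, hb⟩ := mul_ne_zero_iff.mp hn
    have hamod := iha ha fun p hp hpa => h p hp (hpa.mul_right b)
    have hbmod := ihb hb fun p hp hpb => h p hp (hpb.mul_left a)
    rw [Nat.mul_mod]
    rcases hamod with hamod | hamod <;> rcases hbmod with hbmod | hbmod <;> simp [hamod, hbmod]

theorem Int.prime_mod_eight_of_dvd_sq_add_two_mul_sq {p : ℕ} (hp : p.Prime) (hp2 : p ≠ 2)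
    {y c : ℤ} (hdvd : (p : ℤ) ∣ y ^ 2 + 2 * c ^ 2) (hc : ¬ (p : ℤ) ∣ c) :
    p % 8 = 1 ∨ p % 8 = 3 := by
  have := Fact.mk hp
  have hsum : (y : ZMod p) ^ 2 + 2 * (c : ZMod p) ^ 2 = 0 := by
    exact_mod_cast (ZMod.intCast_zmod_eq_zero_iff_dvd _ p).mpr hdvd
  have hc0 : (c : ZMod p) ≠ 0 := fun h0 => hc ((ZMod.intCast_zmod_eq_zero_iff_dvd c p).mp h0)
  refine (ZMod.exists_sq_eq_neg_two_iff hp2).mp ⟨y / c, ?_⟩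
  field_simp
  linear_combination -hsum

theorem cubic_factor_mod_eight {X Y : ℤ} (h : Y ^ 2 = X ^ 3 + 630) :
    (X ^ 2 - 18 * X + 324) % 8 = 7 := by
  have hmod : (Y : ZMod 8) ^ 2 = (X : ZMod 8) ^ 3 + 630 := by
    exact_mod_cast congrArg (Int.cast : ℤ → ZMod 8) h
  have key : ∀ x y : ZMod 8, y ^ 2 = x ^ 3 + 630 → x ^ 2 - 18 * x + 324 = 7 := by decide
  exact (ZMod.intCast_eq_intCast_iff' _ 7 8).mp (by push_cast; exact key _ _ hmod)

theorem not_seventeen_dvd_cubic_factor (X : ℤ) : ¬ (17 : ℤ) ∣ X ^ 2 - 18 * X + 324 := by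
  intro hdvd
  have h0 : ((X ^ 2 - 18 * X + 324 : ℤ) : ZMod 17) = 0 :=
    (ZMod.intCast_zmod_eq_zero_iff_dvd _ 17).mpr hdvd
  push_cast at h0
  have key : ∀ x : ZMod 17, x ^ 2 - 18 * x + 324 ≠ 0 := by decide
  exact key _ h0

theorem prime_dvd_cubic_factor_mod_eight {X Y : ℤ} (h : Y ^ 2 = X ^ 3 + 630) {p : ℕ}
    (hp : p.Prime) (hpq : (p : ℤ) ∣ X ^ 2 - 18 * X + 324) : p % 8 = 1 ∨ p % 8 = 3 := by
  have hp2 : p ≠ 2 := by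
    rintro rfl
    have := cubic_factor_mod_eight h
    omega
  by_cases h51 : (p : ℤ) ∣ 51
  · rcases (Nat.Prime.dvd_mul hp).mp (show p ∣ 3 * 17 by exact_mod_cast h51) with h3 | h17
    · rw [(Nat.prime_dvd_prime_iff_eq hp Nat.prime_three).mp h3]
      right; rfl
    · rw [(Nat.prime_dvd_prime_iff_eq hp (by norm_num)).mp h17] at hpq
      exact absurd hpq (not_seventeen_dvd_cubic_factor X)
  · have hdvd : X ^ 2 - 18 * X + 324 ∣ Y ^ 2 + 2 * 51 ^ 2 := ⟨X + 18, by linear_combination h⟩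
    exact Int.prime_mod_eight_of_dvd_sq_add_two_mul_sq hp hp2 (hpq.trans hdvd) h51

theorem mordell_630 : ¬ ∃ X Y : ℤ, Y^2 = X^3 + 630 := by
  rintro ⟨X, Y, h⟩
  obtain ⟨q, hq⟩ : ∃ q : ℕ, (q : ℤ) = X ^ 2 - 18 * X + 324 :=
    ⟨_, Int.toNat_of_nonneg (by nlinarith [sq_nonneg (X - 9)])⟩
  have hq8 : q % 8 = 7 := by
    have := cubic_factor_mod_eight h
    omega
  have := Nat.mod_eight_eq_one_or_three_of_forall_prime_dvd (n := q) (by omega)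
    fun p hp hpq => prime_dvd_cubic_factor_mod_eight h hp (hq ▸ Int.natCast_dvd_natCast.mpr hpq)
  omega
end

section
/- Let x, z, n be integers with n ≥ 2 such that (x-1)^6 + x^6 + (x+1)^6 = z^n. Then n is odd and n is not divisible by 3. -/
lemma mod3_aux : ∀ a b : ZMod 3, (a - 1)^6 + a^6 + (a + 1)^6 ≠ b * b := by decide

lemma mod7_aux : ∀ a b : ZMod 7, (a - 1)^6 + a^6 + (a + 1)^6 ≠ b ^ 3 := by decide

theorem exponent_odd_not_div_three (x z : ℤ) (n : ℕ) (hn : 2 ≤ n)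
    (h : (x - 1)^6 + x^6 + (x + 1)^6 = z^n) : Odd n ∧ ¬ (3 ∣ n) := by
  constructor
  · rcases Nat.even_or_odd n with he | ho
    · exfalso
      obtain ⟨k, hk⟩ := he
      have h3 : ((x : ZMod 3) - 1)^6 + (x : ZMod 3)^6 + ((x : ZMod 3) + 1)^6
          = ((z : ZMod 3))^n := by
        have := congrArg (Int.cast : ℤ → ZMod 3) h
        push_cast at this
        exact this
      rw [hk, pow_add] at h3
      exact mod3_aux (x : ZMod 3) ((z : ZMod 3) ^ k) h3
    · exact ho
  · intro hd
    obtain ⟨k, hk⟩ := hd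
    have h7 : ((x : ZMod 7) - 1)^6 + (x : ZMod 7)^6 + ((x : ZMod 7) + 1)^6
        = ((z : ZMod 7))^n := by
      have := congrArg (Int.cast : ℤ → ZMod 7) h
      push_cast at this
      exact this
    rw [hk, pow_mul'] at h7
    exact mod7_aux (x : ZMod 7) ((z : ZMod 7) ^ k) h7
end
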